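/- Let (Σ_n) be the simple symmetric random walk on ℤ starting at 0, i.e. Σ_n = ε_1 + ⋯ + ε_n with (ε_i) i.i.d. taking values ±1 with probability 1/2 each, and let M_n = max_{0 ≤ k ≤ n} Σ_k. Then the process T_n = 2M_n - Σ_n is a Markov chain on ℕ with transition probabilities B(0,1)=1, B(n,n+1)=(n+2)/(2(n+1)), B(n,n-1)=n/(2(n+1)) for n ≥ 1. -/

import Mathlib

open MeasureTheory ProbabilityTheory Finset
open scoped ENNReal

/-- Discrete Bessel(3) kernel on ℤ (supported on ℕ). -/
noncomputable def besselKerZ (n m : ℤ) : ℝ :=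
  if n = 0 then (if m = 1 then 1 else 0)
  else if m = n + 1 then ((n : ℝ) + 2) / (2 * ((n : ℝ) + 1))
  else if m = n - 1 then (n : ℝ) / (2 * ((n : ℝ) + 1))
  else 0

namespace PitmanAux
set_option linter.unusedSectionVars false


/-- partial sums -/
def sgF (s : ℕ → ℤ) (k : ℕ) : ℤ := ∑ i ∈ Finset.range k, s i

/-- running max -/
def mxF (s : ℕ → ℤ) (k : ℕ) : ℤ :=
  (Finset.range (k+1)).sup' Finset.nonempty_range_add_one (fun j => sgF s j)

/-- Pitman transform -/
def ttF (s : ℕ → ℤ) (k : ℕ) : ℤ := 2 * mxF s k - sgF s k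

lemma sgF_zero (s : ℕ → ℤ) : sgF s 0 = 0 := by simp [sgF]

lemma sgF_succ (s : ℕ → ℤ) (k : ℕ) : sgF s (k+1) = sgF s k + s k := by
  simp [sgF, Finset.sum_range_succ]

lemma mxF_zero (s : ℕ → ℤ) : mxF s 0 = 0 := by simp [mxF, sgF]

lemma mxF_succ (s : ℕ → ℤ) (k : ℕ) : mxF s (k+1) = max (mxF s k) (sgF s (k+1)) := by
  have : Finset.range (k+1+1) = insert (k+1) (Finset.range (k+1)) := Finset.range_add_one
  rw [mxF, mxF]
  rw [show ((Finset.range (k+1+1)).sup' Finset.nonempty_range_add_one (fun j => sgF s j)) =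
      ((insert (k+1) (Finset.range (k+1))).sup' (by simp) (fun j => sgF s j)) from by congr 1]
  rw [Finset.sup'_insert]
  exact max_comm _ _

lemma ttF_zero (s : ℕ → ℤ) : ttF s 0 = 0 := by simp [ttF, mxF_zero, sgF_zero]

lemma le_mxF (s : ℕ → ℤ) (k : ℕ) : sgF s k ≤ mxF s k :=
  Finset.le_sup' _ (Finset.self_mem_range_succ k)

lemma mxF_nonneg (s : ℕ → ℤ) (k : ℕ) : 0 ≤ mxF s k := by
  have h0 : (0:ℕ) ∈ Finset.range (k+1) := Finset.mem_range.mpr k.succ_pos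
  have := Finset.le_sup' (f := fun j => sgF s j) h0
  rw [sgF_zero] at this
  exact this

lemma mxF_le_ttF (s : ℕ → ℤ) (k : ℕ) : mxF s k ≤ ttF s k := by
  have := le_mxF s k; simp [ttF]; omega

lemma ttF_nonneg (s : ℕ → ℤ) (k : ℕ) : 0 ≤ ttF s k :=
  le_trans (mxF_nonneg s k) (mxF_le_ttF s k)

lemma sgF_congr {s s' : ℕ → ℤ} {n : ℕ} (h : ∀ i < n, s i = s' i) {k : ℕ} (hk : k ≤ n) :
    sgF s k = sgF s' k := by
  refine Finset.sum_congr rfl fun i hi => h i ?_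
  exact lt_of_lt_of_le (Finset.mem_range.mp hi) hk

lemma mxF_congr {s s' : ℕ → ℤ} {n : ℕ} (h : ∀ i < n, s i = s' i) {k : ℕ} (hk : k ≤ n) :
    mxF s k = mxF s' k := by
  refine Finset.sup'_congr _ rfl fun j hj => ?_
  exact sgF_congr h (le_trans (Finset.mem_range_succ_iff.mp hj) hk)

lemma ttF_congr {s s' : ℕ → ℤ} {n : ℕ} (h : ∀ i < n, s i = s' i) {k : ℕ} (hk : k ≤ n) :
    ttF s k = ttF s' k := by
  rw [ttF, ttF, sgF_congr h hk, mxF_congr h hk]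

/-- one-step transition, case ε = -1 -/
lemma step_neg {s : ℕ → ℤ} {k : ℕ} (h : s k = -1) :
    mxF s (k+1) = mxF s k ∧ ttF s (k+1) = ttF s k + 1 := by
  have h1 := le_mxF s k
  have h2 : sgF s (k+1) = sgF s k - 1 := by rw [sgF_succ, h]; ring
  have h3 : mxF s (k+1) = mxF s k := by rw [mxF_succ, h2]; omega
  constructor
  · exact h3
  · rw [ttF, ttF, h3, h2]; ring

/-- one-step transition, case ε = +1 at the max -/
lemma step_pos_max {s : ℕ → ℤ} {k : ℕ} (h : s k = 1) (hm : sgF s k = mxF s k) :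
    mxF s (k+1) = mxF s k + 1 ∧ ttF s (k+1) = ttF s k + 1 := by
  have h2 : sgF s (k+1) = sgF s k + 1 := by rw [sgF_succ, h]
  have h3 : mxF s (k+1) = mxF s k + 1 := by rw [mxF_succ, h2]; omega
  constructor
  · exact h3
  · rw [ttF, ttF, h3, h2]; omega

/-- one-step transition, case ε = +1 below the max -/
lemma step_pos_lt {s : ℕ → ℤ} {k : ℕ} (h : s k = 1) (hm : sgF s k < mxF s k) :
    mxF s (k+1) = mxF s k ∧ ttF s (k+1) = ttF s k - 1 := by
  have h2 : sgF s (k+1) = sgF s k + 1 := by rw [sgF_succ, h]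
  have h3 : mxF s (k+1) = mxF s k := by rw [mxF_succ, h2]; omega
  constructor
  · exact h3
  · rw [ttF, ttF, h3, h2]; ring



variable {Ω : Type*} [MeasurableSpace Ω]

/-- the path/max event -/
def evA (ε : ℕ → Ω → ℤ) (n : ℕ) (p : ℕ → ℤ) (m : ℤ) : Set Ω :=
  {ω | (∀ k ≤ n, ttF (fun i => ε i ω) k = p k) ∧ mxF (fun i => ε i ω) n = m}

/-- the path event -/
def evE (ε : ℕ → Ω → ℤ) (n : ℕ) (p : ℕ → ℤ) : Set Ω :=
  {ω | ∀ k ≤ n, ttF (fun i => ε i ω) k = p k}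

def res (ε : ℕ → Ω → ℤ) (n : ℕ) : Ω → (↥(Finset.range n) → ℤ) := fun ω i => ε i ω

def extR (n : ℕ) (u : ↥(Finset.range n) → ℤ) : ℕ → ℤ :=
  fun i => if h : i ∈ Finset.range n then u ⟨i, h⟩ else 0

lemma agree_extR (ε : ℕ → Ω → ℤ) (n : ℕ) (ω : Ω) :
    ∀ i < n, (fun j => ε j ω) i = extR n (res ε n ω) i := by
  intro i hi
  simp [extR, res, Finset.mem_range, hi]

lemma evA_eq_preimage (ε : ℕ → Ω → ℤ) (n : ℕ) (p : ℕ → ℤ) (m : ℤ) :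
    evA ε n p m = res ε n ⁻¹'
      {u | (∀ k ≤ n, ttF (extR n u) k = p k) ∧ mxF (extR n u) n = m} := by
  ext ω
  have hag := agree_extR ε n ω
  simp only [evA, Set.mem_setOf_eq, Set.mem_preimage]
  exact and_congr
    (forall₂_congr fun k hk => by rw [ttF_congr hag hk])
    (by rw [mxF_congr hag le_rfl])

lemma evE_eq_preimage (ε : ℕ → Ω → ℤ) (n : ℕ) (p : ℕ → ℤ) :
    evE ε n p = res ε n ⁻¹' {u | ∀ k ≤ n, ttF (extR n u) k = p k} := by
  ext ω
  have hag := agree_extR ε n ω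
  simp only [evE, Set.mem_setOf_eq, Set.mem_preimage]
  exact forall₂_congr fun k hk => by rw [ttF_congr hag hk]

lemma measurable_res {ε : ℕ → Ω → ℤ} (hmeas : ∀ i, Measurable (ε i)) (n : ℕ) :
    Measurable (res ε n) :=
  measurable_pi_lambda _ (fun i => hmeas i)

lemma measurableSet_pi_all {n : ℕ} (S : Set (↥(Finset.range n) → ℤ)) : MeasurableSet S :=
  S.to_countable.measurableSet

lemma measurableSet_evA {ε : ℕ → Ω → ℤ} (hmeas : ∀ i, Measurable (ε i))
    (n : ℕ) (p : ℕ → ℤ) (m : ℤ) : MeasurableSet (evA ε n p m) := by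
  rw [evA_eq_preimage]
  exact measurable_res hmeas n (measurableSet_pi_all _)

lemma measurableSet_evE {ε : ℕ → Ω → ℤ} (hmeas : ∀ i, Measurable (ε i))
    (n : ℕ) (p : ℕ → ℤ) : MeasurableSet (evE ε n p) := by
  rw [evE_eq_preimage]
  exact measurable_res hmeas n (measurableSet_pi_all _)

variable {μ : Measure Ω} [IsProbabilityMeasure μ] {ε : ℕ → Ω → ℤ}

lemma meas_inter_indep (hmeas : ∀ i, Measurable (ε i))
    (hindep : iIndepFun ε μ)
    (n : ℕ) (S : Set (↥(Finset.range n) → ℤ)) (c : ℤ) :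
    μ (res ε n ⁻¹' S ∩ {ω | ε n ω = c})
      = μ (res ε n ⁻¹' S) * μ {ω | ε n ω = c} := by
  have hd : Disjoint (Finset.range n) ({n} : Finset ℕ) := by simp
  have h := hindep.indepFun_finset (Finset.range n) {n} hd hmeas
  have h2 := h.measure_inter_preimage_eq_mul S
    {u : ↥({n} : Finset ℕ) → ℤ | u ⟨n, Finset.mem_singleton_self n⟩ = c}
    ((S.to_countable.measurableSet)) ((Set.to_countable _).measurableSet)
  have h3 : (fun a (i : ↥({n} : Finset ℕ)) => ε i a) ⁻¹'
      {u : ↥({n} : Finset ℕ) → ℤ | u ⟨n, Finset.mem_singleton_self n⟩ = c}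
      = {ω | ε n ω = c} := rfl
  rw [h3] at h2
  exact h2

lemma sgF_eq (s : ℕ → ℤ) (k : ℕ) : sgF s k = 2 * mxF s k - ttF s k := by
  simp [ttF]

/-- master pointwise step characterization -/
lemma mem_evA_succ {ε : ℕ → Ω → ℤ} {n : ℕ} {ω : Ω} (hg : ε n ω = 1 ∨ ε n ω = -1)
    (p : ℕ → ℤ) (m : ℤ) :
    ω ∈ evA ε (n+1) p m ↔
      (ε n ω = -1 ∧ ω ∈ evA ε n p m ∧ p (n+1) = p n + 1) ∨
      (ε n ω = 1 ∧ ω ∈ evA ε n p (p n) ∧ p (n+1) = p n + 1 ∧ m = p n + 1) ∨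
      (ε n ω = 1 ∧ ω ∈ evA ε n p m ∧ p (n+1) = p n - 1 ∧ m ≠ p n) := by
  have hle := le_mxF (fun i => ε i ω) n
  have hsg := sgF_eq (fun i => ε i ω) n
  have hgneg : ε n ω = -1 → (fun i => ε i ω) n = -1 := fun h => h
  have hgpos : ε n ω = 1 → (fun i => ε i ω) n = 1 := fun h => h
  simp only [evA, Set.mem_setOf_eq]
  constructor
  · rintro ⟨hpath, hmx⟩
    have hpath' : ∀ k ≤ n, ttF (fun i => ε i ω) k = p k :=
      fun k hk => hpath k (le_trans hk (Nat.le_succ n))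
    have htn : ttF (fun i => ε i ω) n = p n := hpath' n le_rfl
    have htn1 : ttF (fun i => ε i ω) (n+1) = p (n+1) := hpath (n+1) le_rfl
    rcases hg with h1 | h1
    · by_cases hcase : sgF (fun i => ε i ω) n = mxF (fun i => ε i ω) n
      · obtain ⟨hm', ht'⟩ := step_pos_max (hgpos h1) hcase
        refine Or.inr (Or.inl ⟨h1, ⟨hpath', ?_⟩, ?_, ?_⟩) <;> omega
      · have hlt : sgF (fun i => ε i ω) n < mxF (fun i => ε i ω) n :=
          lt_of_le_of_ne hle hcase
        obtain ⟨hm', ht'⟩ := step_pos_lt (hgpos h1) hlt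
        refine Or.inr (Or.inr ⟨h1, ⟨hpath', ?_⟩, ?_, ?_⟩) <;> omega
    · obtain ⟨hm', ht'⟩ := step_neg (s := fun i => ε i ω) (k := n) (hgneg h1)
      exact Or.inl ⟨h1, ⟨hpath', by omega⟩, by omega⟩
  · have hsplit : (∀ k ≤ n, ttF (fun i => ε i ω) k = p k) →
        ttF (fun i => ε i ω) (n+1) = p (n+1) →
        mxF (fun i => ε i ω) (n+1) = m →
        (∀ k ≤ n+1, ttF (fun i => ε i ω) k = p k) ∧ mxF (fun i => ε i ω) (n+1) = m := by
      intro hpath ht hm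
      refine ⟨fun k hk => ?_, hm⟩
      rcases Nat.lt_succ_iff_lt_or_eq.mp (Nat.lt_succ_of_le hk) with h | h
      · exact hpath k (Nat.lt_succ_iff.mp h)
      · subst h; exact ht
    rintro (⟨h1, ⟨hpath, hmx⟩, hp⟩ | ⟨h1, ⟨hpath, hmx⟩, hp, hm⟩ | ⟨h1, ⟨hpath, hmx⟩, hp, hm⟩)
    · obtain ⟨hm', ht'⟩ := step_neg (s := fun i => ε i ω) (k := n) (hgneg h1)
      have htn : ttF (fun i => ε i ω) n = p n := hpath n le_rfl
      exact hsplit hpath (by omega) (by omega)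
    · have htn : ttF (fun i => ε i ω) n = p n := hpath n le_rfl
      have hc : sgF (fun i => ε i ω) n = mxF (fun i => ε i ω) n := by omega
      obtain ⟨hm', ht'⟩ := step_pos_max (hgpos h1) hc
      exact hsplit hpath (by omega) (by omega)
    · have htn : ttF (fun i => ε i ω) n = p n := hpath n le_rfl
      have hc : sgF (fun i => ε i ω) n < mxF (fun i => ε i ω) n := by omega
      obtain ⟨hm', ht'⟩ := step_pos_lt (hgpos h1) hc
      exact hsplit hpath (by omega) (by omega)


variable {μ : Measure Ω} [IsProbabilityMeasure μ]

lemma mu_eps (hval : ∀ i, μ {ω | ε i ω = 1} = 1/2 ∧ μ {ω | ε i ω = -1} = 1/2)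
    {c : ℤ} (hc : c = 1 ∨ c = -1) (n : ℕ) : μ {ω | ε n ω = c} = 2⁻¹ := by
  rcases hc with h | h <;> subst h
  · rw [(hval n).1, one_div]
  · rw [(hval n).2, one_div]

lemma mu_evA_inter_eps (hmeas : ∀ i, Measurable (ε i))
    (hindep : iIndepFun ε μ)
    (hval : ∀ i, μ {ω | ε i ω = 1} = 1/2 ∧ μ {ω | ε i ω = -1} = 1/2)
    (n : ℕ) (p : ℕ → ℤ) (m : ℤ) {c : ℤ} (hc : c = 1 ∨ c = -1) :
    μ (evA ε n p m ∩ {ω | ε n ω = c}) = 2⁻¹ * μ (evA ε n p m) := by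
  rw [evA_eq_preimage, meas_inter_indep hmeas hindep, mu_eps hval hc, mul_comm,
    ← evA_eq_preimage]

lemma measurableSet_good (hmeas : ∀ i, Measurable (ε i)) (n : ℕ) :
    MeasurableSet {ω : Ω | ε n ω = 1 ∨ ε n ω = -1} := by
  have h : {ω : Ω | ε n ω = 1 ∨ ε n ω = -1} = {ω | ε n ω = 1} ∪ {ω | ε n ω = -1} := rfl
  rw [h]
  exact ((hmeas n) (measurableSet_singleton 1)).union
    ((hmeas n) (measurableSet_singleton (-1)))

lemma mu_goodc (hmeas : ∀ i, Measurable (ε i))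
    (hval : ∀ i, μ {ω | ε i ω = 1} = 1/2 ∧ μ {ω | ε i ω = -1} = 1/2) (n : ℕ) :
    μ {ω : Ω | ε n ω = 1 ∨ ε n ω = -1}ᶜ = 0 := by
  rw [prob_compl_eq_zero_iff (measurableSet_good hmeas n)]
  have h : {ω : Ω | ε n ω = 1 ∨ ε n ω = -1} = {ω | ε n ω = 1} ∪ {ω | ε n ω = -1} := rfl
  rw [h, measure_union ?disj
    (show MeasurableSet {ω : Ω | ε n ω = -1} from (hmeas n) (measurableSet_singleton (-1))),
    (hval n).1, (hval n).2]
  · rw [one_div]; exact ENNReal.inv_two_add_inv_two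
  case disj =>
    rw [Set.disjoint_left]
    intro ω h1 h2
    simp only [Set.mem_setOf_eq] at h1 h2
    omega

lemma mu_inter_good (X G : Set Ω) (hG : μ Gᶜ = 0) : μ X = μ (X ∩ G) := by
  refine le_antisymm ?_ (measure_mono Set.inter_subset_left)
  calc μ X ≤ μ ((X ∩ G) ∪ Gᶜ) := measure_mono (fun x hx => by
        by_cases h : x ∈ G
        · exact Or.inl ⟨hx, h⟩
        · exact Or.inr h)
    _ ≤ μ (X ∩ G) + μ Gᶜ := measure_union_le _ _
    _ = μ (X ∩ G) := by rw [hG, add_zero]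

/-- the one-step measure recursion -/
lemma D_succ (hmeas : ∀ i, Measurable (ε i))
    (hindep : iIndepFun ε μ)
    (hval : ∀ i, μ {ω | ε i ω = 1} = 1/2 ∧ μ {ω | ε i ω = -1} = 1/2)
    (n : ℕ) (p : ℕ → ℤ) (m : ℤ) :
    μ (evA ε (n+1) p m) =
      if p (n+1) = p n + 1 then
        (if m = p n + 1 then 2⁻¹ * μ (evA ε n p m) + 2⁻¹ * μ (evA ε n p (p n))
         else 2⁻¹ * μ (evA ε n p m))
      else if p (n+1) = p n - 1 then
        (if m = p n then 0 else 2⁻¹ * μ (evA ε n p m))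
      else 0 := by
  have hGc := mu_goodc hmeas hval n
  have hstart := mu_inter_good (μ := μ) (evA ε (n+1) p m) _ hGc
  by_cases h1 : p (n+1) = p n + 1
  · by_cases h2 : m = p n + 1
    · have hset : evA ε (n+1) p m ∩ {ω : Ω | ε n ω = 1 ∨ ε n ω = -1}
          = (evA ε n p m ∩ {ω | ε n ω = -1}) ∪ (evA ε n p (p n) ∩ {ω | ε n ω = 1}) := by
        ext ω
        constructor
        · rintro ⟨hA, hg⟩
          rcases (mem_evA_succ hg p m).mp hA with ⟨hc, hA', -⟩ | ⟨hc, hA', -⟩ | ⟨hc, hA', hp, hm⟩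
          · exact Or.inl ⟨hA', hc⟩
          · exact Or.inr ⟨hA', hc⟩
          · exact absurd hp (by omega)
        · rintro (⟨hA', hc⟩ | ⟨hA', hc⟩)
          · exact ⟨(mem_evA_succ (Or.inr hc) p m).mpr (Or.inl ⟨hc, hA', h1⟩), Or.inr hc⟩
          · exact ⟨(mem_evA_succ (Or.inl hc) p m).mpr
              (Or.inr (Or.inl ⟨hc, hA', h1, h2⟩)), Or.inl hc⟩
      rw [if_pos h1, if_pos h2, hstart, hset, measure_union ?disj
        (show MeasurableSet (evA ε n p (p n) ∩ {ω : Ω | ε n ω = 1}) from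
          (measurableSet_evA hmeas n p (p n)).inter ((hmeas n) (measurableSet_singleton 1))),
        mu_evA_inter_eps hmeas hindep hval n p m (Or.inr rfl),
        mu_evA_inter_eps hmeas hindep hval n p (p n) (Or.inl rfl)]
      case disj =>
        rw [Set.disjoint_left]
        rintro ω ⟨-, hc⟩ ⟨-, hc'⟩
        simp only [Set.mem_setOf_eq] at hc hc'
        omega
    · have hset : evA ε (n+1) p m ∩ {ω : Ω | ε n ω = 1 ∨ ε n ω = -1}
          = evA ε n p m ∩ {ω | ε n ω = -1} := by
        ext ω
        constructor
        · rintro ⟨hA, hg⟩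
          rcases (mem_evA_succ hg p m).mp hA with ⟨hc, hA', -⟩ | ⟨hc, hA', -, hm⟩ | ⟨hc, hA', hp, hm⟩
          · exact ⟨hA', hc⟩
          · exact absurd hm h2
          · exact absurd hp (by omega)
        · rintro ⟨hA', hc⟩
          exact ⟨(mem_evA_succ (Or.inr hc) p m).mpr (Or.inl ⟨hc, hA', h1⟩), Or.inr hc⟩
      rw [if_pos h1, if_neg h2, hstart, hset,
        mu_evA_inter_eps hmeas hindep hval n p m (Or.inr rfl)]
  · by_cases h3 : p (n+1) = p n - 1
    · by_cases h4 : m = p n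
      · have hset : evA ε (n+1) p m ∩ {ω : Ω | ε n ω = 1 ∨ ε n ω = -1} = ∅ := by
          ext ω
          simp only [Set.mem_empty_iff_false, iff_false]
          rintro ⟨hA, hg⟩
          rcases (mem_evA_succ hg p m).mp hA with ⟨-, -, hp⟩ | ⟨-, -, hp, -⟩ | ⟨-, -, -, hm⟩
          · exact h1 hp
          · exact h1 hp
          · exact hm h4
        rw [if_neg h1, if_pos h3, if_pos h4, hstart, hset, measure_empty]
      · have hset : evA ε (n+1) p m ∩ {ω : Ω | ε n ω = 1 ∨ ε n ω = -1}
            = evA ε n p m ∩ {ω | ε n ω = 1} := by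
          ext ω
          constructor
          · rintro ⟨hA, hg⟩
            rcases (mem_evA_succ hg p m).mp hA with ⟨-, -, hp⟩ | ⟨-, -, hp, -⟩ | ⟨hc, hA', -, -⟩
            · exact absurd hp h1
            · exact absurd hp h1
            · exact ⟨hA', hc⟩
          · rintro ⟨hA', hc⟩
            exact ⟨(mem_evA_succ (Or.inl hc) p m).mpr
              (Or.inr (Or.inr ⟨hc, hA', h3, h4⟩)), Or.inl hc⟩
        rw [if_neg h1, if_pos h3, if_neg h4, hstart, hset,
          mu_evA_inter_eps hmeas hindep hval n p m (Or.inl rfl)]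
    · have hset : evA ε (n+1) p m ∩ {ω : Ω | ε n ω = 1 ∨ ε n ω = -1} = ∅ := by
        ext ω
        simp only [Set.mem_empty_iff_false, iff_false]
        rintro ⟨hA, hg⟩
        rcases (mem_evA_succ hg p m).mp hA with ⟨-, -, hp⟩ | ⟨-, -, hp, -⟩ | ⟨-, -, hp, -⟩
        · exact h1 hp
        · exact h1 hp
        · exact h3 hp
      rw [if_neg h1, if_neg h3, hstart, hset, measure_empty]

lemma evA_zero (p : ℕ → ℤ) (m : ℤ) :
    evA ε 0 p m = if p 0 = 0 ∧ m = 0 then (Set.univ : Set Ω) else ∅ := by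
  have h0 : ∀ ω : Ω, ttF (fun i => ε i ω) 0 = 0 := fun ω => ttF_zero _
  have h0' : ∀ ω : Ω, mxF (fun i => ε i ω) 0 = 0 := fun ω => mxF_zero _
  ext ω
  simp only [evA, Set.mem_setOf_eq, Nat.le_zero]
  split_ifs with h
  · simp only [Set.mem_univ, iff_true]
    exact ⟨fun k hk => by subst hk; rw [h0 ω, h.1], by rw [h0' ω, h.2]⟩
  · simp only [Set.mem_empty_iff_false, iff_false]
    rintro ⟨hpath, hmx⟩
    exact h ⟨by rw [← hpath 0 rfl, h0 ω], by rw [← hmx, h0' ω]⟩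

lemma D_zero (p : ℕ → ℤ) (m : ℤ) :
    μ (evA ε 0 p m) = if p 0 = 0 ∧ m = 0 then 1 else 0 := by
  rw [evA_zero]
  split_ifs
  · exact measure_univ
  · exact measure_empty

lemma D_uniform (hmeas : ∀ i, Measurable (ε i))
    (hindep : iIndepFun ε μ)
    (hval : ∀ i, μ {ω | ε i ω = 1} = 1/2 ∧ μ {ω | ε i ω = -1} = 1/2) :
    ∀ (n : ℕ) (p : ℕ → ℤ) (m : ℤ),
      μ (evA ε n p m) = if 0 ≤ m ∧ m ≤ p n then μ (evA ε n p 0) else 0 := by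
  intro n
  induction n with
  | zero =>
    intro p m
    rw [D_zero, D_zero]
    split_ifs <;> first | rfl | (exfalso; omega)
  | succ n ih =>
    intro p m
    rw [D_succ hmeas hindep hval n p m, D_succ hmeas hindep hval n p 0,
      ih p m, ih p (p n), ih p 0]
    split_ifs <;> first | rfl | (exfalso; omega) | simp

lemma evA_congr {n : ℕ} {p p' : ℕ → ℤ} (h : ∀ k ≤ n, p k = p' k) (m : ℤ) :
    evA ε n p m = evA (Ω := Ω) ε n p' m := by
  ext ω
  simp only [evA, Set.mem_setOf_eq]
  exact and_congr (forall₂_congr fun k hk => by rw [h k hk]) Iff.rfl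

lemma evE_eq_biUnion (n : ℕ) (p : ℕ → ℤ) :
    evE ε n p = ⋃ m ∈ (Finset.Icc (0:ℤ) (p n)), evA (Ω := Ω) ε n p m := by
  ext ω
  simp only [Set.mem_iUnion, Finset.mem_Icc, evE, evA, Set.mem_setOf_eq]
  constructor
  · intro h
    refine ⟨mxF (fun i => ε i ω) n, ⟨mxF_nonneg _ n, ?_⟩, h, rfl⟩
    rw [← h n le_rfl]
    exact mxF_le_ttF _ n
  · rintro ⟨m, -, h, -⟩
    exact h

lemma mu_evE (hmeas : ∀ i, Measurable (ε i))
    (hindep : iIndepFun ε μ)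
    (hval : ∀ i, μ {ω | ε i ω = 1} = 1/2 ∧ μ {ω | ε i ω = -1} = 1/2)
    (n : ℕ) (p : ℕ → ℤ) :
    μ (evE ε n p) = ((Finset.Icc (0:ℤ) (p n)).card : ℝ≥0∞) * μ (evA ε n p 0) := by
  rw [evE_eq_biUnion, measure_biUnion_finset ?disj (fun m _ => measurableSet_evA hmeas n p m)]
  · have hterm : ∀ m ∈ Finset.Icc (0:ℤ) (p n), μ (evA ε n p m) = μ (evA ε n p 0) := by
      intro m hm
      rw [D_uniform hmeas hindep hval n p m, if_pos (Finset.mem_Icc.mp hm)]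
    rw [Finset.sum_congr rfl hterm, Finset.sum_const, nsmul_eq_mul]
  case disj =>
    intro m hm m' hm' hne
    simp only [Function.onFun]
    rw [Set.disjoint_left]
    rintro ω ⟨-, h1⟩ ⟨-, h2⟩
    exact hne (by rw [← h1, ← h2])

lemma ratio_calc (A : ℝ≥0∞) (hA0 : A ≠ 0) (hAtop : A ≠ ⊤) (b c : ℝ≥0∞)
    (hc0 : c ≠ 0) (hctop : c ≠ ⊤) :
    (A * c)⁻¹ * (b * (2⁻¹ * c)) = b / (2 * A) := by
  rw [ENNReal.mul_inv (Or.inl hA0) (Or.inl hAtop)]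
  have h1 : A⁻¹ * c⁻¹ * (b * (2⁻¹ * c)) = b * (2⁻¹ * A⁻¹) * (c⁻¹ * c) := by ring
  rw [h1, ENNReal.inv_mul_cancel hc0 hctop, mul_one, div_eq_mul_inv,
    ENNReal.mul_inv (Or.inl two_ne_zero) (Or.inl ENNReal.ofNat_ne_top)]

lemma ofReal_ratio (b a : ℕ) :
    ENNReal.ofReal ((b:ℝ) / (2*((a:ℝ)+1))) = (b : ℝ≥0∞) / (2 * ((a:ℝ≥0∞)+1)) := by
  rw [ENNReal.ofReal_div_of_pos (by positivity)]
  congr 1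
  · exact ENNReal.ofReal_natCast b
  · rw [show (2*((a:ℝ)+1)) = ((2*(a+1) : ℕ) : ℝ) by push_cast; ring,
      ENNReal.ofReal_natCast]
    push_cast
    ring


lemma bessel_up (t : ℤ) (ht : 0 ≤ t) :
    besselKerZ t (t+1) = ((t:ℝ)+2)/(2*((t:ℝ)+1)) := by
  unfold besselKerZ
  by_cases h : t = 0
  · subst h; norm_num
  · rw [if_neg h, if_pos rfl]

lemma bessel_down (t : ℤ) (ht : 1 ≤ t) :
    besselKerZ t (t-1) = (t:ℝ)/(2*((t:ℝ)+1)) := by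
  unfold besselKerZ
  rw [if_neg (by omega), if_neg (by omega), if_pos rfl]

lemma bessel_zero (t m : ℤ) (h1 : m ≠ t+1) (h2 : t = 0 ∨ m ≠ t-1) :
    besselKerZ t m = 0 := by
  unfold besselKerZ
  by_cases h : t = 0
  · rw [if_pos h, if_neg (by omega)]
  · rw [if_neg h, if_neg h1, if_neg (by omega)]

theorem pitman_discrete_aux
    {Ω : Type*} [MeasurableSpace Ω] (μ : Measure Ω) [IsProbabilityMeasure μ]
    (ε : ℕ → Ω → ℤ) (hmeas : ∀ i, Measurable (ε i))
    (hindep : iIndepFun ε μ)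
    (hval : ∀ i, μ {ω | ε i ω = 1} = 1/2 ∧ μ {ω | ε i ω = -1} = 1/2)
    (Sig : ℕ → Ω → ℤ) (hSig : ∀ n ω, Sig n ω = ∑ i ∈ Finset.range n, ε i ω)
    (M : ℕ → Ω → ℤ)
    (hM : ∀ n ω, M n ω = (Finset.range (n+1)).sup' Finset.nonempty_range_add_one (fun k => Sig k ω))
    (T : ℕ → Ω → ℤ) (hT : ∀ n ω, T n ω = 2 * M n ω - Sig n ω) :
    (∀ n ω, 0 ≤ T n ω) ∧
    ∀ (n : ℕ) (path : ℕ → ℤ) (m : ℤ),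
      μ {ω | ∀ k ≤ n, T k ω = path k} ≠ 0 →
      μ[|{ω | ∀ k ≤ n, T k ω = path k}] {ω | T (n+1) ω = m}
        = ENNReal.ofReal (besselKerZ (path n) m) := by
  classical
  have hT' : ∀ k ω, T k ω = ttF (fun i => ε i ω) k := by
    intro k ω
    have hMx : M k ω = mxF (fun i => ε i ω) k := by
      rw [hM k ω, mxF]
      exact Finset.sup'_congr Finset.nonempty_range_add_one rfl (fun j _ => hSig j ω)
    rw [hT k ω, hMx, hSig k ω, ttF, sgF]
  constructor
  · intro n ω; rw [hT']; exact ttF_nonneg _ n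
  intro n p m hne
  have hE : {ω | ∀ k ≤ n, T k ω = p k} = evE ε n p := by
    ext ω
    simp only [Set.mem_setOf_eq, evE]
    exact forall₂_congr fun k hk => by rw [hT']
  rw [hE] at hne ⊢
  set p' : ℕ → ℤ := fun k => if k = n+1 then m else p k with hp'
  have hagree : ∀ k ≤ n, p' k = p k := by
    intro k hk
    simp only [hp', if_neg (by omega : ¬ k = n+1)]
  have hEF : evE ε n p ∩ {ω | T (n+1) ω = m} = evE (Ω := Ω) ε (n+1) p' := by
    ext ω
    simp only [Set.mem_inter_iff, Set.mem_setOf_eq, evE]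
    constructor
    · rintro ⟨h1, h2⟩ k hk
      rcases Nat.lt_succ_iff_lt_or_eq.mp (Nat.lt_succ_of_le hk) with h | h
      · rw [hagree k (Nat.lt_succ_iff.mp h)]
        exact h1 k (Nat.lt_succ_iff.mp h)
      · subst h
        simp only [hp', if_pos rfl]
        rw [← hT']
        exact h2
    · intro h
      refine ⟨fun k hk => ?_, ?_⟩
      · rw [← hagree k hk]
        exact h k (le_trans hk (Nat.le_succ n))
      · have h2 := h (n+1) le_rfl
        simp only [hp', if_pos rfl] at h2
        rw [hT']
        exact h2
  rw [cond_apply (measurableSet_evE hmeas n p), hEF]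
  have hc_top : μ (evA ε n p 0) ≠ ⊤ := measure_ne_top μ _
  rw [mu_evE hmeas hindep hval n p] at hne ⊢
  rw [mu_evE hmeas hindep hval (n+1) p']
  have hm' : p' (n+1) = m := by simp only [hp', if_pos rfl]
  have hpn : p' n = p n := hagree n le_rfl
  have hcard0 : ((Finset.Icc (0:ℤ) (p n)).card : ℝ≥0∞) ≠ 0 := by
    intro h; exact hne (by rw [h, zero_mul])
  have hc0 : μ (evA ε n p 0) ≠ 0 := by
    intro h; exact hne (by rw [h, mul_zero])
  have ht : 0 ≤ p n := by
    by_contra h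
    apply hcard0
    rw [Finset.Icc_eq_empty (by omega)]
    simp
  set a := (p n).toNat with ha
  have hta : (p n) = (a:ℤ) := (Int.toNat_of_nonneg ht).symm
  have hcard : (Finset.Icc (0:ℤ) (p n)).card = a + 1 := by rw [Int.card_Icc]; omega
  have hAcast : (((a+1 : ℕ)) : ℝ≥0∞) ≠ 0 ∧ (((a+1:ℕ)) : ℝ≥0∞) ≠ ⊤ := by
    constructor
    · exact_mod_cast Nat.succ_ne_zero a
    · exact ENNReal.natCast_ne_top _
  rcases eq_or_ne m (p n + 1) with hm | hm
  · -- upward step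
    have hcard2 : (Finset.Icc (0:ℤ) (p' (n+1))).card = a + 2 := by
      rw [Int.card_Icc, hm', hm]; omega
    have hA0 : μ (evA ε (n+1) p' 0) = 2⁻¹ * μ (evA ε n p 0) := by
      rw [D_succ hmeas hindep hval n p' 0, if_pos (by rw [hm', hpn, hm]),
        if_neg (by rw [hpn]; omega), evA_congr hagree 0]
    rw [hA0, hcard, hcard2, hm, bessel_up (p n) ht]
    have hcalc := ratio_calc (((a+1:ℕ)) : ℝ≥0∞) hAcast.1 hAcast.2 ((a+2 : ℕ) : ℝ≥0∞)
      (μ (evA ε n p 0)) hc0 hc_top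
    rw [hcalc]
    have : ((p n : ℝ)+2)/(2*((p n : ℝ)+1)) = ((a+2 : ℕ) : ℝ) / (2*((a:ℝ)+1)) := by
      rw [hta]; push_cast; ring_nf
    rw [this, ofReal_ratio]
    norm_cast
  · rcases eq_or_ne m (p n - 1) with hm2 | hm2
    · rcases eq_or_ne (p n) 0 with hpz | hpz
      · -- downward from 0 : impossible, measure zero
        have hcard2 : (Finset.Icc (0:ℤ) (p' (n+1))).card = 0 := by
          rw [hm', hm2, hpz]
          rw [Finset.Icc_eq_empty (by omega)]
          rfl
        rw [hcard2, bessel_zero (p n) m hm (Or.inl hpz)]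
        simp
      · -- downward step, p n ≥ 1
        have ht1 : 1 ≤ p n := by omega
        have hcard2 : (Finset.Icc (0:ℤ) (p' (n+1))).card = a := by
          rw [Int.card_Icc, hm', hm2]; omega
        have hA0 : μ (evA ε (n+1) p' 0) = 2⁻¹ * μ (evA ε n p 0) := by
          rw [D_succ hmeas hindep hval n p' 0, if_neg (by rw [hm', hpn]; omega),
            if_pos (by rw [hm', hpn, hm2]), if_neg (by rw [hpn]; omega),
            evA_congr hagree 0]
        rw [hA0, hcard, hcard2, hm2, bessel_down (p n) ht1]
        have hcalc := ratio_calc (((a+1:ℕ)) : ℝ≥0∞) hAcast.1 hAcast.2 ((a : ℕ) : ℝ≥0∞)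
          (μ (evA ε n p 0)) hc0 hc_top
        rw [hcalc]
        have : ((p n : ℝ))/(2*((p n : ℝ)+1)) = ((a : ℕ) : ℝ) / (2*((a:ℝ)+1)) := by
          rw [hta]; push_cast; ring_nf
        rw [this, ofReal_ratio]
        norm_cast
    · -- impossible step
      have hA0 : μ (evA ε (n+1) p' 0) = 0 := by
        rw [D_succ hmeas hindep hval n p' 0, if_neg (by rw [hm', hpn]; exact hm),
          if_neg (by rw [hm', hpn]; exact hm2)]
      rw [hA0, bessel_zero (p n) m hm (Or.inr hm2)]
      simp

end PitmanAux

/-- Pitman's discrete theorem: `2 max_{k ≤ n} Σ_k − Σ_n` is a Markov chain on ℕ with the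
discrete Bessel(3) transition kernel. -/
theorem pitman_discrete
    {Ω : Type*} [MeasurableSpace Ω] (μ : Measure Ω) [IsProbabilityMeasure μ]
    (ε : ℕ → Ω → ℤ) (hmeas : ∀ i, Measurable (ε i))
    (hindep : iIndepFun ε μ)
    (hval : ∀ i, μ {ω | ε i ω = 1} = 1/2 ∧ μ {ω | ε i ω = -1} = 1/2)
    (Sig : ℕ → Ω → ℤ) (hSig : ∀ n ω, Sig n ω = ∑ i ∈ Finset.range n, ε i ω)
    (M : ℕ → Ω → ℤ)
    (hM : ∀ n ω, M n ω = (Finset.range (n+1)).sup' Finset.nonempty_range_add_one (fun k => Sig k ω))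
    (T : ℕ → Ω → ℤ) (hT : ∀ n ω, T n ω = 2 * M n ω - Sig n ω) :
    (∀ n ω, 0 ≤ T n ω) ∧
    ∀ (n : ℕ) (path : ℕ → ℤ) (m : ℤ),
      μ {ω | ∀ k ≤ n, T k ω = path k} ≠ 0 →
      μ[|{ω | ∀ k ≤ n, T k ω = path k}] {ω | T (n+1) ω = m}
        = ENNReal.ofReal (besselKerZ (path n) m) :=
  PitmanAux.pitman_discrete_aux μ ε hmeas hindep hval Sig hSig M hM T hT
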